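/- Fix m ≥ 1 and f : V_{m−1} → ℝ. Then min{ ℰₘ(g) : g : Vₘ → ℝ, g|_{V_{m−1}} = f } = ℰ_{m−1}(f), and the minimizing extension g is unique. Consequently, for every f ∈ C(K,ℝ) the sequence m ↦ ℰₘ(f|_{Vₘ}) is nondecreasing. -/

import Mathlib

open Filter
open scoped ENNReal

noncomputable section

/-- Vertices of the base triangle. -/
def sgv1 : ℝ × ℝ := (0, 0)
def sgv2 : ℝ × ℝ := (1/2, Real.sqrt 3 / 2)
def sgv3 : ℝ × ℝ := (1, 0)

def sgvtx : Fin 3 → ℝ × ℝ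
  | 0 => sgv1
  | 1 => sgv2
  | 2 => sgv3

/-- The contraction `F_i(x) = (x - v_i)/2 + v_i = (x + v_i)/2`. -/
def sgF (i : Fin 3) (x : ℝ × ℝ) : ℝ × ℝ := (1/2 : ℝ) • (x + sgvtx i)

/-- `F_w = F_{w₁} ∘ ⋯ ∘ F_{wₙ}` (empty word gives the identity). -/
def sgFw (w : List (Fin 3)) : ℝ × ℝ → ℝ × ℝ :=
  w.foldr (fun i g => sgF i ∘ g) id

instance : DecidableEq (ℝ × ℝ) := Classical.decEq _

/-- The vertex sets `Vₙ`. -/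
def sgV : ℕ → Finset (ℝ × ℝ)
  | 0 => {sgv1, sgv2, sgv3}
  | n + 1 => Finset.univ.biUnion fun i : Fin 3 => (sgV n).image (sgF i)

/-- Adjacency on `Γₙ`: distinct points lying in a common image `F_w(V₀)`, `|w| = n`. -/
def sgAdj (n : ℕ) (x y : ℝ × ℝ) : Prop :=
  x ≠ y ∧ ∃ w : List (Fin 3), w.length = n ∧
    x ∈ (sgV 0).image (sgFw w) ∧ y ∈ (sgV 0).image (sgFw w)

open Classical in
/-- Discrete Dirichlet energy `ℰₙ` (each undirected edge counted once: we sum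
over ordered pairs and halve). -/
def sgE (n : ℕ) (f : ℝ × ℝ → ℝ) : ℝ :=
  (5/3 : ℝ) ^ n * ((1:ℝ)/2) *
    ∑ x ∈ sgV n, ∑ y ∈ sgV n, if sgAdj n x y then (f y - f x) ^ 2 / 2 else 0

open Classical in
/-- Discrete Kuramoto energy `𝒥ₙ` (each undirected edge counted once). -/
def sgJ (n : ℕ) (f : ℝ × ℝ → ℝ) : ℝ :=
  (5/3 : ℝ) ^ n * (1 / (4 * Real.pi ^ 2)) * ((1:ℝ)/2) *
    ∑ x ∈ sgV n, ∑ y ∈ sgV n,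
      if sgAdj n x y then 1 - Real.cos (2 * Real.pi * (f y - f x)) else 0

open Classical in
/-- Discrete Laplacian `Δₘ`. -/
def sgLap (m : ℕ) (f : ℝ × ℝ → ℝ) (x : ℝ × ℝ) : ℝ :=
  (5/3 : ℝ) ^ m * ∑ y ∈ sgV m, if sgAdj m x y then f y - f x else 0

/-- `ℰ(f) = supₙ ℰₙ(f) ∈ [0,∞]`. -/
def sgEtot (f : ℝ × ℝ → ℝ) : ℝ≥0∞ :=
  ⨆ n : ℕ, ENNReal.ofReal (sgE n f)

/-- The circle `𝕋 = ℝ/ℤ`. -/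
abbrev 𝕋c := AddCircle (1 : ℝ)

/-- `HasWinding c k`: the loop `c : [0,1] → 𝕋` admits a continuous lift `ĉ` with
`ĉ(1) - ĉ(0) = k`. -/
def HasWinding (c : ℝ → 𝕋c) (k : ℤ) : Prop :=
  ∃ ch : ℝ → ℝ, ContinuousOn ch (Set.Icc 0 1) ∧
    (∀ t ∈ Set.Icc (0:ℝ) 1, ((ch t : ℝ) : 𝕋c) = c t) ∧ ch 1 - ch 0 = (k : ℝ)

/-- Constant-speed clockwise parametrization of `∂T` starting at the leftmost
vertex `v₁`, passing through `v₂` and then `v₃`. -/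
def sgc0 (t : ℝ) : ℝ × ℝ :=
  if t ≤ 1/3 then sgv1 + (3 * t) • (sgv2 - sgv1)
  else if t ≤ 2/3 then sgv2 + (3 * t - 1) • (sgv3 - sgv2)
  else sgv3 + (3 * t - 2) • (sgv1 - sgv3)

/-- Constant-speed clockwise parametrization of `∂T_w` starting at its leftmost
vertex `F_w(v₁)`. -/
def sgcw (w : List (Fin 3)) (t : ℝ) : ℝ × ℝ := sgFw w (sgc0 t)


instance : Fact ((0:ℝ) < 1) := ⟨one_pos⟩

/-- `cos(2πθ)` for `θ ∈ 𝕋` (well defined via any representative). -/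
def cosT (θ : 𝕋c) : ℝ :=
  Real.cos (2 * Real.pi * ((AddCircle.equivIco 1 0 θ : ℝ)))

open Classical in
/-- The `𝕋`-valued Kuramoto energy `𝒥ₙ` (each undirected edge counted once). -/
def sgJT (n : ℕ) (u : ℝ × ℝ → 𝕋c) : ℝ :=
  (5/3 : ℝ) ^ n * (1 / (4 * Real.pi ^ 2)) * ((1:ℝ)/2) *
    ∑ x ∈ sgV n, ∑ y ∈ sgV n,
      if sgAdj n x y then 1 - cosT (u y - u x) else 0

/-!
Two distinct cells `F_w(T)`, `F_{w'}(T)` of the same level meet in at most one common corner.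
Hence `ℰₙ` is `(5/3)ⁿ/2` times the sum over the `3ⁿ` level-`n` cells of the triangle energies
`(a - b)² + (b - c)² + (c - a)²` of the corner values, and the points of `V_{n+1} \ Vₙ` are the
edge midpoints of level-`n` cells, each lying in exactly one cell. The extension problem thus
decouples into one triangle per cell, where an explicit identity shows that the energy of the
three subtriangles exceeds `3/5` of the coarse energy by a positive definite quadratic form in
the deviations of the midpoint values from the 1/5–2/5 rule. The factor `5/3` in `ℰ` cancels
the `3/5`; monotonicity is the case `g = f`.
-/

open Function Set

lemma sgF_apply (i : Fin 3) (x : ℝ × ℝ) :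
    sgF i x = ((x.1 + (sgvtx i).1) / 2, (x.2 + (sgvtx i).2) / 2) := by
  simp only [sgF, Prod.ext_iff, Prod.smul_fst, Prod.smul_snd, Prod.fst_add, Prod.snd_add,
    smul_eq_mul]
  constructor <;> ring

lemma sgF_injective (i : Fin 3) : Injective (sgF i) :=
  fun _ _ h => add_right_cancel (smul_right_injective _ (by norm_num : (1/2 : ℝ) ≠ 0) h)

lemma sgF_eq_self_iff {i : Fin 3} {x : ℝ × ℝ} : sgF i x = x ↔ x = sgvtx i := by
  constructor
  · intro h
    simp only [sgF_apply, Prod.ext_iff] at h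
    exact Prod.ext (by linarith [h.1]) (by linarith [h.2])
  · rintro rfl
    simp only [sgF_apply, Prod.ext_iff]
    constructor <;> ring

lemma sgF_sgvtx_self (i : Fin 3) : sgF i (sgvtx i) = sgvtx i := sgF_eq_self_iff.2 rfl

lemma sgF_sgvtx_comm (j k : Fin 3) : sgF j (sgvtx k) = sgF k (sgvtx j) := by
  simp only [sgF, add_comm]

lemma sgvtx_injective : Injective sgvtx := by
  have h3 : Real.sqrt 3 ≠ 0 := by positivity
  intro i j h
  fin_cases i <;> fin_cases j <;> simp_all [sgvtx, sgv1, sgv2, sgv3, Prod.ext_iff]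

/-- The closed triangle with vertices `sgvtx`. -/
def sgT : Set (ℝ × ℝ) :=
  {p | 0 ≤ p.2 ∧ p.2 ≤ Real.sqrt 3 * p.1 ∧ p.2 ≤ Real.sqrt 3 * (1 - p.1)}

lemma sgvtx_mem_sgT (i : Fin 3) : sgvtx i ∈ sgT := by
  have h3 : Real.sqrt 3 ^ 2 = 3 := Real.sq_sqrt (by norm_num)
  have : 0 < Real.sqrt 3 := by positivity
  fin_cases i <;> refine ⟨?_, ?_, ?_⟩ <;> simp only [sgvtx, sgv1, sgv2, sgv3] <;> nlinarith

lemma mapsTo_sgF_sgT (i : Fin 3) : MapsTo (sgF i) sgT sgT := by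
  rintro ⟨a, b⟩ ⟨h1, h2, h3⟩
  have : 0 < Real.sqrt 3 := by positivity
  have hs : Real.sqrt 3 ^ 2 = 3 := Real.sq_sqrt (by norm_num)
  rw [sgF_apply]
  fin_cases i <;> refine ⟨?_, ?_, ?_⟩ <;> simp only [sgvtx, sgv1, sgv2, sgv3] at * <;> nlinarith

lemma mem_sgF_image_iff {i : Fin 3} {S : Set (ℝ × ℝ)} {x : ℝ × ℝ} :
    x ∈ sgF i '' S ↔ (2 * x.1 - (sgvtx i).1, 2 * x.2 - (sgvtx i).2) ∈ S := by
  have hinv : ∀ y, sgF i y = x ↔ y = (2 * x.1 - (sgvtx i).1, 2 * x.2 - (sgvtx i).2) := by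
    intro y
    simp only [sgF_apply, Prod.ext_iff]
    constructor <;> rintro ⟨h1, h2⟩ <;> constructor <;> linarith
  simp only [Set.mem_image, hinv, exists_eq_right]

lemma sgF_image_inter_subset {i j : Fin 3} (hij : i ≠ j) :
    sgF i '' sgT ∩ sgF j '' sgT ⊆ {sgF i (sgvtx j)} := by
  rintro ⟨a, b⟩ ⟨hi, hj⟩
  rw [mem_sgF_image_iff] at hi hj
  obtain ⟨hi1, hi2, hi3⟩ := hi
  obtain ⟨hj1, hj2, hj3⟩ := hj
  have h := (by positivity : 0 < Real.sqrt 3)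
  have hs : Real.sqrt 3 ^ 2 = 3 := Real.sq_sqrt (by norm_num)
  rw [Set.mem_singleton_iff, sgF_apply]
  fin_cases i <;> fin_cases j <;> simp only [sgvtx, sgv1, sgv2, sgv3] at * <;>
    first
    | exact absurd rfl hij
    | refine Prod.ext ?_ ?_ <;> dsimp only at * <;>
        nlinarith [mul_le_mul_of_nonneg_left hi2 h.le, mul_le_mul_of_nonneg_left hi3 h.le,
          mul_le_mul_of_nonneg_left hj2 h.le, mul_le_mul_of_nonneg_left hj3 h.le,
          mul_le_mul_of_nonneg_left hi1 h.le, mul_le_mul_of_nonneg_left hj1 h.le]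

lemma sgvtx_mem_sgF_image_iff {b c : Fin 3} : sgvtx b ∈ sgF c '' sgT ↔ c = b := by
  refine ⟨fun h => ?_, fun h => h ▸ ⟨_, sgvtx_mem_sgT c, sgF_sgvtx_self c⟩⟩
  by_contra hcb
  have hb : sgvtx b ∈ sgF b '' sgT := ⟨_, sgvtx_mem_sgT b, sgF_sgvtx_self b⟩
  have hfix : sgF c (sgvtx b) = sgvtx b := (sgF_image_inter_subset hcb ⟨h, hb⟩).symm
  exact hcb (sgvtx_injective (sgF_eq_self_iff.1 hfix).symm)

lemma sgF_sgvtx_ne_sgvtx {j k : Fin 3} (hjk : j ≠ k) (i : Fin 3) :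
    sgF j (sgvtx k) ≠ sgvtx i := by
  intro h
  have hj : sgvtx i ∈ sgF j '' sgT := ⟨_, sgvtx_mem_sgT k, h⟩
  have hk : sgvtx i ∈ sgF k '' sgT := ⟨_, sgvtx_mem_sgT j, sgF_sgvtx_comm k j ▸ h⟩
  exact hjk ((sgvtx_mem_sgF_image_iff.1 hj).trans (sgvtx_mem_sgF_image_iff.1 hk).symm)

lemma eq_or_eq_of_sgF_sgvtx_eq {j k j' k' : Fin 3}
    (h : sgF j (sgvtx k) = sgF j' (sgvtx k')) : j' = j ∨ j' = k := by
  by_contra! hne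
  have hmem : sgF j (sgvtx k) ∈ sgF j '' sgT ∩ sgF j' '' sgT :=
    ⟨⟨_, sgvtx_mem_sgT k, rfl⟩, ⟨_, sgvtx_mem_sgT k', h.symm⟩⟩
  exact hne.2 (sgvtx_injective (sgF_injective j (sgF_image_inter_subset hne.1.symm hmem))).symm

lemma sgF_sgvtx_eq_iff {j k j' k' : Fin 3} (hjk : j ≠ k) (hjk' : j' ≠ k') :
    sgF j (sgvtx k) = sgF j' (sgvtx k') ↔ (j' = j ∧ k' = k) ∨ (j' = k ∧ k' = j) := by
  refine ⟨fun h => ?_, ?_⟩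
  · have hk' := eq_or_eq_of_sgF_sgvtx_eq (h.trans (sgF_sgvtx_comm j' k'))
    rcases eq_or_eq_of_sgF_sgvtx_eq h with rfl | rfl <;> rcases hk' with rfl | rfl <;> simp_all
  · rintro (⟨rfl, rfl⟩ | ⟨rfl, rfl⟩)
    exacts [rfl, sgF_sgvtx_comm _ _]

lemma sgFw_cons (i : Fin 3) (w : List (Fin 3)) : sgFw (i :: w) = sgF i ∘ sgFw w := rfl

lemma sgFw_append (w w' : List (Fin 3)) : sgFw (w ++ w') = sgFw w ∘ sgFw w' := by
  induction w with
  | nil => rfl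
  | cons i w ih => rw [List.cons_append, sgFw_cons, sgFw_cons, ih, comp_assoc]

lemma sgFw_append_singleton (w : List (Fin 3)) (j : Fin 3) (x : ℝ × ℝ) :
    sgFw (w ++ [j]) x = sgFw w (sgF j x) := by
  rw [sgFw_append]; rfl

lemma sgFw_injective (w : List (Fin 3)) : Injective (sgFw w) := by
  induction w with
  | nil => exact injective_id
  | cons i w ih => exact (sgF_injective i).comp ih

lemma mapsTo_sgFw_sgT (w : List (Fin 3)) : MapsTo (sgFw w) sgT sgT := by
  induction w with
  | nil => exact mapsTo_id _
  | cons i w ih => exact (mapsTo_sgF_sgT i).comp ih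

lemma sgFw_sgvtx_of_mem {b : Fin 3} {w : List (Fin 3)} (h : sgvtx b ∈ sgFw w '' sgT) :
    sgFw w (sgvtx b) = sgvtx b := by
  induction w with
  | nil => rfl
  | cons c u ih =>
    rw [sgFw_cons, image_comp] at h
    obtain rfl : c = b :=
      sgvtx_mem_sgF_image_iff.1 (image_mono (mapsTo_sgFw_sgT u).image_subset h)
    obtain ⟨y, hy, hyb⟩ := h
    obtain rfl : y = sgvtx c := sgF_injective c (hyb.trans (sgF_sgvtx_self c).symm)
    rw [sgFw_cons, comp_apply, ih hy, sgF_sgvtx_self]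

lemma sgFw_image_inter_subset {w w' : List (Fin 3)} (hl : w.length = w'.length) (hne : w ≠ w') :
    ∃ i, sgFw w '' sgT ∩ sgFw w' '' sgT ⊆ {sgFw w (sgvtx i)} := by
  induction w generalizing w' with
  | nil => exact absurd (List.length_eq_zero_iff.1 hl.symm).symm hne
  | cons a u ih =>
    obtain _ | ⟨b, u'⟩ := w'
    · simp at hl
    rw [sgFw_cons, sgFw_cons, image_comp, image_comp]
    by_cases hab : a = b
    · subst hab
      obtain ⟨i, hi⟩ := ih (by simpa using hl) (fun h => hne (h ▸ rfl))
      refine ⟨i, ?_⟩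
      rw [comp_apply, ← image_inter (sgF_injective a), ← image_singleton]
      exact image_mono hi
    · have hsub : sgF a '' (sgFw u '' sgT) ∩ sgF b '' (sgFw u' '' sgT) ⊆ {sgF a (sgvtx b)} :=
        (inter_subset_inter (image_mono (mapsTo_sgFw_sgT u).image_subset)
          (image_mono (mapsTo_sgFw_sgT u').image_subset)).trans (sgF_image_inter_subset hab)
      obtain hempty | ⟨x, hx⟩ :=
        (sgF a '' (sgFw u '' sgT) ∩ sgF b '' (sgFw u' '' sgT)).eq_empty_or_nonempty
      · exact ⟨0, hempty ▸ empty_subset _⟩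
      -- the common corner `F_a v_b` lies in `F_a F_u T`, so `v_b` is a fixed corner of `F_u`
      obtain ⟨y, hy, hyx⟩ := hx.1
      obtain rfl : y = sgvtx b := sgF_injective a (hyx.trans (hsub hx))
      refine ⟨b, ?_⟩
      rwa [comp_apply, sgFw_sgvtx_of_mem hy]

lemma eq_of_sgFw_sgF_sgvtx_mem {w w' : List (Fin 3)} (hl : w.length = w'.length)
    {j k : Fin 3} (hjk : j ≠ k) (h : sgFw w (sgF j (sgvtx k)) ∈ sgFw w' '' sgT) : w = w' := by
  by_contra hne
  obtain ⟨i, hi⟩ := sgFw_image_inter_subset hl hne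
  have hmem : sgFw w (sgF j (sgvtx k)) ∈ sgFw w '' sgT :=
    ⟨_, mapsTo_sgF_sgT j (sgvtx_mem_sgT k), rfl⟩
  exact sgF_sgvtx_ne_sgvtx hjk i (sgFw_injective w (hi ⟨hmem, h⟩))

lemma mem_sgV_zero_iff {x : ℝ × ℝ} : x ∈ sgV 0 ↔ ∃ i, sgvtx i = x := by
  constructor
  · simp only [sgV, Finset.mem_insert, Finset.mem_singleton]
    rintro (rfl | rfl | rfl)
    exacts [⟨0, rfl⟩, ⟨1, rfl⟩, ⟨2, rfl⟩]
  · rintro ⟨i, rfl⟩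
    fin_cases i <;> simp [sgV, sgvtx]

lemma mem_sgV_iff {n : ℕ} {x : ℝ × ℝ} :
    x ∈ sgV n ↔ ∃ w : List (Fin 3), w.length = n ∧ ∃ i, sgFw w (sgvtx i) = x := by
  induction n generalizing x with
  | zero => simp [mem_sgV_zero_iff, List.length_eq_zero_iff, sgFw]
  | succ n ih =>
    simp only [sgV, Finset.mem_biUnion, Finset.mem_univ, Finset.mem_image, true_and, ih]
    constructor
    · rintro ⟨a, _, ⟨w, hw, i, rfl⟩, rfl⟩
      exact ⟨a :: w, by rw [List.length_cons, hw], i, rfl⟩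
    · rintro ⟨_ | ⟨a, w⟩, hw, i, rfl⟩
      · simp at hw
      · exact ⟨a, _, ⟨w, by simpa using hw, i, rfl⟩, rfl⟩

lemma sgFw_sgvtx_mem_sgV {n : ℕ} {w : List (Fin 3)} (hw : w.length = n) (i : Fin 3) :
    sgFw w (sgvtx i) ∈ sgV n :=
  mem_sgV_iff.2 ⟨w, hw, i, rfl⟩

lemma sgFw_sgF_sgvtx_not_mem_sgV {n : ℕ} {w : List (Fin 3)} (hw : w.length = n)
    {j k : Fin 3} (hjk : j ≠ k) : sgFw w (sgF j (sgvtx k)) ∉ sgV n := by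
  intro h
  obtain ⟨w', hw', i, hi⟩ := mem_sgV_iff.1 h
  obtain rfl := eq_of_sgFw_sgF_sgvtx_mem (hw.trans hw'.symm) hjk ⟨_, sgvtx_mem_sgT i, hi⟩
  exact sgF_sgvtx_ne_sgvtx hjk i (sgFw_injective w hi).symm

lemma mem_sgV_succ {n : ℕ} {x : ℝ × ℝ} (hx : x ∈ sgV (n + 1)) :
    x ∈ sgV n ∨
      ∃ w : List (Fin 3), w.length = n ∧ ∃ j k, j ≠ k ∧ sgFw w (sgF j (sgvtx k)) = x := by
  obtain ⟨w, hw, i, rfl⟩ := mem_sgV_iff.1 hx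
  obtain rfl | ⟨u, j, rfl⟩ := w.eq_nil_or_concat'
  · simp at hw
  have hu : u.length = n := by simpa using hw
  rw [sgFw_append_singleton]
  by_cases hji : j = i
  · exact .inl (hji ▸ (sgF_sgvtx_self j).symm ▸ sgFw_sgvtx_mem_sgV hu j)
  · exact .inr ⟨u, hu, j, i, hji, rfl⟩

lemma sgAdj_iff {n : ℕ} {x y : ℝ × ℝ} :
    sgAdj n x y ↔ ∃ w : List (Fin 3), w.length = n ∧
      ∃ i j, i ≠ j ∧ sgFw w (sgvtx i) = x ∧ sgFw w (sgvtx j) = y := by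
  simp only [sgAdj, Finset.mem_image, mem_sgV_zero_iff]
  constructor
  · rintro ⟨hxy, w, hw, ⟨_, ⟨i, rfl⟩, rfl⟩, ⟨_, ⟨j, rfl⟩, rfl⟩⟩
    exact ⟨w, hw, i, j, fun hij => hxy (hij ▸ rfl), rfl, rfl⟩
  · rintro ⟨w, hw, i, j, hij, rfl, rfl⟩
    exact ⟨fun h => hij (sgvtx_injective (sgFw_injective w h)), w, hw,
      ⟨_, ⟨i, rfl⟩, rfl⟩, ⟨_, ⟨j, rfl⟩, rfl⟩⟩

def triEnergy (a b c : ℝ) : ℝ := (a - b) ^ 2 + (b - c) ^ 2 + (c - a) ^ 2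

lemma triEnergy_nonneg (a b c : ℝ) : 0 ≤ triEnergy a b c := by
  unfold triEnergy; positivity

/-- `a b c` are corner values and `x y z` the values at the midpoints of `ab`, `bc`, `ca`. -/
lemma triEnergy_subdivide (a b c x y z : ℝ) :
    triEnergy a x z + triEnergy x b y + triEnergy z y c =
      3 / 5 * triEnergy a b c +
        (2 * ((x - (2*a+2*b+c)/5) ^ 2 + (y - (a+2*b+2*c)/5) ^ 2 + (z - (2*a+b+2*c)/5) ^ 2) +
          triEnergy (x - (2*a+2*b+c)/5) (y - (a+2*b+2*c)/5) (z - (2*a+b+2*c)/5)) := by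
  unfold triEnergy; ring

lemma le_triEnergy_subdivide (a b c x y z : ℝ) :
    3 / 5 * triEnergy a b c ≤ triEnergy a x z + triEnergy x b y + triEnergy z y c := by
  rw [triEnergy_subdivide]
  exact le_add_of_nonneg_right (add_nonneg (by positivity) (triEnergy_nonneg _ _ _))

lemma triEnergy_subdivide_eq_iff {a b c x y z : ℝ} :
    triEnergy a x z + triEnergy x b y + triEnergy z y c = 3 / 5 * triEnergy a b c ↔
      x = (2*a+2*b+c)/5 ∧ y = (a+2*b+2*c)/5 ∧ z = (2*a+b+2*c)/5 := by
  rw [triEnergy_subdivide, add_eq_left, ← sub_eq_zero (a := x), ← sub_eq_zero (a := y),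
    ← sub_eq_zero (a := z)]
  generalize x - (2*a+2*b+c)/5 = p, y - (a+2*b+2*c)/5 = q, z - (2*a+b+2*c)/5 = r
  have hT := triEnergy_nonneg p q r
  refine ⟨fun h => ?_, fun ⟨hp, hq, hr⟩ => by simp [hp, hq, hr, triEnergy]⟩
  refine ⟨?_, ?_, ?_⟩ <;> refine pow_eq_zero_iff two_ne_zero |>.1 ?_ <;>
    nlinarith [sq_nonneg p, sq_nonneg q, sq_nonneg r]

def cellEnergy (g : ℝ × ℝ → ℝ) (w : List (Fin 3)) : ℝ :=
  triEnergy (g (sgFw w (sgvtx 0))) (g (sgFw w (sgvtx 1))) (g (sgFw w (sgvtx 2)))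

open Classical in
lemma sum_sgAdj_eq_sum_cells (n : ℕ) (t : ℝ × ℝ → ℝ × ℝ → ℝ) :
    (∑ x ∈ sgV n, ∑ y ∈ sgV n, if sgAdj n x y then t x y else 0) =
      ∑ σ : Fin n → Fin 3, ∑ i : Fin 3, ∑ j : Fin 3,
        if i ≠ j then t (sgFw (List.ofFn σ) (sgvtx i)) (sgFw (List.ofFn σ) (sgvtx j)) else 0 := by
  rw [← Finset.sum_product', ← Finset.sum_filter]
  simp_rw [← Fintype.sum_prod_type']
  rw [← Finset.sum_filter]
  symm
  refine Finset.sum_nbij (fun q => (sgFw (List.ofFn q.1) (sgvtx q.2.1),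
    sgFw (List.ofFn q.1) (sgvtx q.2.2))) ?_ ?_ ?_ (fun _ _ => rfl)
  · rintro ⟨σ, i, j⟩ hij
    simp only [Finset.mem_filter, Finset.mem_univ, true_and, Finset.mem_product] at hij ⊢
    exact ⟨⟨sgFw_sgvtx_mem_sgV (List.length_ofFn) i, sgFw_sgvtx_mem_sgV (List.length_ofFn) j⟩,
      sgAdj_iff.2 ⟨_, List.length_ofFn, i, j, hij, rfl, rfl⟩⟩
  · rintro ⟨σ, i, j⟩ hij ⟨σ', i', j'⟩ - h
    simp only [Finset.coe_filter, Finset.mem_univ, true_and, mem_ofPred_eq, Prod.mk.injEq] at hij h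
    obtain rfl : σ = σ' := by
      by_contra hne
      obtain ⟨p, hp⟩ := sgFw_image_inter_subset (by simp) (List.ofFn_injective.ne hne)
      have hi := hp ⟨⟨_, sgvtx_mem_sgT i, rfl⟩, ⟨_, sgvtx_mem_sgT i', h.1.symm⟩⟩
      have hj := hp ⟨⟨_, sgvtx_mem_sgT j, rfl⟩, ⟨_, sgvtx_mem_sgT j', h.2.symm⟩⟩
      exact hij (sgvtx_injective (sgFw_injective _ (hi.trans hj.symm)))
    rw [sgvtx_injective (sgFw_injective _ h.1), sgvtx_injective (sgFw_injective _ h.2)]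
  · rintro ⟨x, y⟩ hxy
    simp only [Finset.coe_filter, Finset.mem_product, mem_ofPred_eq] at hxy
    obtain ⟨w, rfl, i, j, hij, rfl, rfl⟩ := sgAdj_iff.1 hxy.2
    exact ⟨⟨w.get, i, j⟩, by simpa using hij, by simp⟩

lemma sum_ofFn_succ {α M : Type*} [Fintype α] [AddCommMonoid M] (n : ℕ) (h : List α → M) :
    ∑ σ : Fin (n + 1) → α, h (List.ofFn σ) = ∑ τ : Fin n → α, ∑ j : α, h (List.ofFn τ ++ [j]) := by
  rw [← (Fin.snocEquiv fun _ => α).sum_comp, Fintype.sum_prod_type_right]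
  simp only [Fin.snocEquiv_apply, List.ofFn_succ', Fin.snoc_castSucc, Fin.snoc_last,
    List.concat_eq_append]

lemma sgE_eq_sum_cellEnergy (n : ℕ) (g : ℝ × ℝ → ℝ) :
    sgE n g = (5/3 : ℝ) ^ n * (1/2) * ∑ σ : Fin n → Fin 3, cellEnergy g (List.ofFn σ) := by
  rw [sgE, sum_sgAdj_eq_sum_cells]
  congr 2 with σ
  simp only [ne_eq, ite_not, Fin.sum_univ_three, Fin.isValue, ↓reduceIte, Fin.reduceEq,
    zero_ne_one, one_ne_zero, zero_add, add_zero, cellEnergy, triEnergy]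
  ring

lemma sum_cellEnergy_append (g : ℝ × ℝ → ℝ) (w : List (Fin 3)) :
    ∑ j : Fin 3, cellEnergy g (w ++ [j]) =
      triEnergy (g (sgFw w (sgvtx 0))) (g (sgFw w (sgF 0 (sgvtx 1))))
          (g (sgFw w (sgF 0 (sgvtx 2)))) +
        triEnergy (g (sgFw w (sgF 0 (sgvtx 1)))) (g (sgFw w (sgvtx 1)))
          (g (sgFw w (sgF 1 (sgvtx 2)))) +
        triEnergy (g (sgFw w (sgF 0 (sgvtx 2)))) (g (sgFw w (sgF 1 (sgvtx 2))))
          (g (sgFw w (sgvtx 2))) := by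
  simp only [Fin.sum_univ_three, cellEnergy, sgFw_append_singleton, sgF_sgvtx_self]
  rw [sgF_sgvtx_comm 1 0, sgF_sgvtx_comm 2 0, sgF_sgvtx_comm 2 1]

/-- The 1/5–2/5 rule: the harmonic value at the midpoint of the edge `jk` of the cell `w` is
`2/5` of each endpoint value plus `1/5` of the value at the opposite corner. -/
def harmonicMid (f : ℝ × ℝ → ℝ) (w : List (Fin 3)) (j k : Fin 3) : ℝ :=
  (f (sgFw w (sgvtx j)) + f (sgFw w (sgvtx k)) + ∑ i, f (sgFw w (sgvtx i))) / 5

lemma harmonicMid_comm (f : ℝ × ℝ → ℝ) (w : List (Fin 3)) (j k : Fin 3) :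
    harmonicMid f w j k = harmonicMid f w k j := by
  rw [harmonicMid, harmonicMid, add_comm (f _) (f _)]

lemma le_sum_cellEnergy_append (g : ℝ × ℝ → ℝ) (w : List (Fin 3)) :
    3 / 5 * cellEnergy g w ≤ ∑ j : Fin 3, cellEnergy g (w ++ [j]) := by
  rw [sum_cellEnergy_append]
  exact le_triEnergy_subdivide _ _ _ _ _ _

lemma sum_cellEnergy_append_eq_iff (g : ℝ × ℝ → ℝ) (w : List (Fin 3)) :
    ∑ j : Fin 3, cellEnergy g (w ++ [j]) = 3 / 5 * cellEnergy g w ↔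
      ∀ j k, j ≠ k → g (sgFw w (sgF j (sgvtx k))) = harmonicMid g w j k := by
  rw [sum_cellEnergy_append, cellEnergy, triEnergy_subdivide_eq_iff]
  simp only [harmonicMid, Fin.sum_univ_three]
  constructor
  · rintro ⟨h01, h12, h02⟩ j k hjk
    obtain rfl | rfl | rfl : j = 0 ∨ j = 1 ∨ j = 2 := by omega
    all_goals obtain rfl | rfl | rfl : k = 0 ∨ k = 1 ∨ k = 2 := by omega
    all_goals first
      | exact absurd rfl hjk
      | (rw [h01]; ring)
      | (rw [h12]; ring)
      | (rw [h02]; ring)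
      | (rw [sgF_sgvtx_comm, h01]; ring)
      | (rw [sgF_sgvtx_comm, h12]; ring)
      | (rw [sgF_sgvtx_comm, h02]; ring)
  · intro h
    refine ⟨?_, ?_, ?_⟩
    · rw [h 0 1 (by decide)]; ring
    · rw [h 1 2 (by decide)]; ring
    · rw [h 0 2 (by decide)]; ring

section Extension

variable {n : ℕ} {f g : ℝ × ℝ → ℝ}

lemma cellEnergy_eq_of_eqOn (hg : ∀ x ∈ sgV n, g x = f x) {w : List (Fin 3)}
    (hw : w.length = n) : cellEnergy g w = cellEnergy f w := by
  simp only [cellEnergy, hg _ (sgFw_sgvtx_mem_sgV hw _)]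

lemma harmonicMid_eq_of_eqOn (hg : ∀ x ∈ sgV n, g x = f x) {w : List (Fin 3)}
    (hw : w.length = n) (j k : Fin 3) : harmonicMid g w j k = harmonicMid f w j k := by
  simp only [harmonicMid, hg _ (sgFw_sgvtx_mem_sgV hw _)]

lemma sgE_succ_eq_sum (g : ℝ × ℝ → ℝ) :
    sgE (n + 1) g = (5/3 : ℝ) ^ (n + 1) * (1/2) *
      ∑ τ : Fin n → Fin 3, ∑ j : Fin 3, cellEnergy g (List.ofFn τ ++ [j]) := by
  rw [sgE_eq_sum_cellEnergy, sum_ofFn_succ]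

lemma sgE_eq_sum_of_eqOn (hg : ∀ x ∈ sgV n, g x = f x) :
    sgE n f = (5/3 : ℝ) ^ (n + 1) * (1/2) *
      ∑ τ : Fin n → Fin 3, 3 / 5 * cellEnergy g (List.ofFn τ) := by
  simp only [sgE_eq_sum_cellEnergy, cellEnergy_eq_of_eqOn hg List.length_ofFn, ← Finset.mul_sum]
  ring

theorem sgE_le_sgE_succ (hg : ∀ x ∈ sgV n, g x = f x) : sgE n f ≤ sgE (n + 1) g := by
  rw [sgE_eq_sum_of_eqOn hg, sgE_succ_eq_sum]
  gcongr with τ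
  exact le_sum_cellEnergy_append g _

theorem sgE_succ_eq_iff (hg : ∀ x ∈ sgV n, g x = f x) :
    sgE (n + 1) g = sgE n f ↔ ∀ w : List (Fin 3), w.length = n →
      ∀ j k, j ≠ k → g (sgFw w (sgF j (sgvtx k))) = harmonicMid f w j k := by
  rw [sgE_eq_sum_of_eqOn hg, sgE_succ_eq_sum, mul_right_inj' (by positivity), eq_comm,
    Finset.sum_eq_sum_iff_of_le fun τ _ => le_sum_cellEnergy_append g _]
  have hcell (τ : Fin n → Fin 3) :
      3 / 5 * cellEnergy g (List.ofFn τ) = ∑ j : Fin 3, cellEnergy g (List.ofFn τ ++ [j]) ↔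
        ∀ j k, j ≠ k →
          g (sgFw (List.ofFn τ) (sgF j (sgvtx k))) = harmonicMid f (List.ofFn τ) j k := by
    simp only [eq_comm (a := 3 / 5 * cellEnergy g (List.ofFn τ)), sum_cellEnergy_append_eq_iff,
      harmonicMid_eq_of_eqOn hg List.length_ofFn]
  simp only [Finset.mem_univ, true_imp_iff, hcell]
  constructor
  · intro h w hw
    subst hw
    simpa only [List.ofFn_get] using h w.get
  · exact fun h τ => h _ List.length_ofFn

open Classical in
def harmonicExt (n : ℕ) (f : ℝ × ℝ → ℝ) (x : ℝ × ℝ) : ℝ :=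
  if x ∈ sgV n then f x
  else if h : ∃ p : List (Fin 3) × Fin 3 × Fin 3,
      p.1.length = n ∧ p.2.1 ≠ p.2.2 ∧ sgFw p.1 (sgF p.2.1 (sgvtx p.2.2)) = x then
    harmonicMid f h.choose.1 h.choose.2.1 h.choose.2.2
  else 0

lemma harmonicExt_of_mem {x : ℝ × ℝ} (hx : x ∈ sgV n) : harmonicExt n f x = f x :=
  if_pos hx

lemma harmonicExt_sgFw_sgF_sgvtx {w : List (Fin 3)} (hw : w.length = n) {j k : Fin 3}
    (hjk : j ≠ k) : harmonicExt n f (sgFw w (sgF j (sgvtx k))) = harmonicMid f w j k := by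
  have hex : ∃ p : List (Fin 3) × Fin 3 × Fin 3, p.1.length = n ∧ p.2.1 ≠ p.2.2 ∧
      sgFw p.1 (sgF p.2.1 (sgvtx p.2.2)) = sgFw w (sgF j (sgvtx k)) := ⟨(w, j, k), hw, hjk, rfl⟩
  rw [harmonicExt, if_neg (sgFw_sgF_sgvtx_not_mem_sgV hw hjk), dif_pos hex]
  have hspec := hex.choose_spec
  generalize hex.choose = p at hspec ⊢
  obtain ⟨w', j', k'⟩ := p
  obtain ⟨hw', hjk', h⟩ := hspec
  obtain rfl := eq_of_sgFw_sgF_sgvtx_mem (hw'.trans hw.symm) hjk'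
    ⟨_, mapsTo_sgF_sgT _ (sgvtx_mem_sgT _), h.symm⟩
  rcases (sgF_sgvtx_eq_iff hjk hjk').1 (sgFw_injective _ h.symm) with ⟨rfl, rfl⟩ | ⟨rfl, rfl⟩
  exacts [rfl, harmonicMid_comm _ _ _ _]

theorem sgE_succ_harmonicExt (f : ℝ × ℝ → ℝ) : sgE (n + 1) (harmonicExt n f) = sgE n f :=
  (sgE_succ_eq_iff fun _ => harmonicExt_of_mem).2 fun _ hw _ _ => harmonicExt_sgFw_sgF_sgvtx hw

end Extension

theorem statement4_general
    (K : Set (ℝ × ℝ))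
    (m : ℕ) (hm : 1 ≤ m) (f : ℝ × ℝ → ℝ) :
    (∃ g : ℝ × ℝ → ℝ, (∀ x ∈ sgV (m-1), g x = f x) ∧
      sgE m g = sgE (m-1) f ∧
      ∀ g' : ℝ × ℝ → ℝ, (∀ x ∈ sgV (m-1), g' x = f x) → sgE (m-1) f ≤ sgE m g') ∧
    (∀ g g' : ℝ × ℝ → ℝ,
      (∀ x ∈ sgV (m-1), g x = f x) → (∀ x ∈ sgV (m-1), g' x = f x) →
      sgE m g = sgE (m-1) f → sgE m g' = sgE (m-1) f →
      ∀ x ∈ sgV m, g x = g' x) ∧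
    (∀ h : ℝ × ℝ → ℝ, ContinuousOn h K → ∀ k : ℕ, sgE k h ≤ sgE (k+1) h) := by
  obtain ⟨n, rfl⟩ : ∃ n, m = n + 1 := ⟨m - 1, by omega⟩
  rw [Nat.add_sub_cancel]
  refine ⟨⟨harmonicExt n f, fun _ => harmonicExt_of_mem, sgE_succ_harmonicExt f,
    fun _ => sgE_le_sgE_succ⟩, ?_, fun h _ _ => sgE_le_sgE_succ fun _ _ => rfl⟩
  intro g g' hg hg' hE hE' x hx
  rcases mem_sgV_succ hx with hx | ⟨w, hw, j, k, hjk, rfl⟩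
  · rw [hg x hx, hg' x hx]
  · rw [(sgE_succ_eq_iff hg).1 hE w hw j k hjk, (sgE_succ_eq_iff hg').1 hE' w hw j k hjk]

/-- The minimum of `ℰₘ` over all extensions of `f : V_{m-1} → ℝ`
to `Vₘ` equals `ℰ_{m-1}(f)`, the minimizing extension is unique (as a function
on `Vₘ`), and consequently `m ↦ ℰₘ(f|_{Vₘ})` is nondecreasing for every
`f ∈ C(K, ℝ)`. -/
theorem statement4
    (K : Set (ℝ × ℝ)) (hKne : K.Nonempty) (hKcpt : IsCompact K)
    (hKfix : K = ⋃ i : Fin 3, sgF i '' K)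
    (m : ℕ) (hm : 1 ≤ m) (f : ℝ × ℝ → ℝ) :
    (∃ g : ℝ × ℝ → ℝ, (∀ x ∈ sgV (m-1), g x = f x) ∧
      sgE m g = sgE (m-1) f ∧
      ∀ g' : ℝ × ℝ → ℝ, (∀ x ∈ sgV (m-1), g' x = f x) → sgE (m-1) f ≤ sgE m g') ∧
    (∀ g g' : ℝ × ℝ → ℝ,
      (∀ x ∈ sgV (m-1), g x = f x) → (∀ x ∈ sgV (m-1), g' x = f x) →
      sgE m g = sgE (m-1) f → sgE m g' = sgE (m-1) f →
      ∀ x ∈ sgV m, g x = g' x) ∧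
    (∀ h : ℝ × ℝ → ℝ, ContinuousOn h K → ∀ k : ℕ, sgE k h ≤ sgE (k+1) h) :=
  statement4_general K m hm f

end
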